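/- Let K be a differential field of characteristic zero and let K⟨x⟩ denote the fraction field of the differential polynomial ring K{x} in one differential indeterminate x, equipped with the extended derivation. Then the field of constants of K⟨x⟩ equals the field of constants of K. -/

import Mathlib

/-!
Write a constant `z` of `K⟨x⟩` in lowest terms as `p / q`; the Leibniz rule gives
`D p * q = p * D q` for the derivation `D` of `K{x}`. If `x^(N)` is the highest derivative
occurring in `p` or `q`, then `x^(N+1)` enters `D p` only through the term
`∂p/∂x^(N) * x^(N+1)`, so differentiating with respect to `x^(N+1)` yields
`∂p/∂x^(N) * q = p * ∂q/∂x^(N)`. By coprimality `p` divides `∂p/∂x^(N)` and `q` divides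
`∂q/∂x^(N)`, which in characteristic zero is impossible for a polynomial involving `x^(N)`,
since differentiation lowers its degree in `x^(N)`. Hence `p` and `q` lie in `K`, and so
does `z`.
-/

open MvPolynomial

namespace MvPolynomial

section PDeriv

variable {σ R : Type*} [CommSemiring R] {i : σ} {p : MvPolynomial σ R}

theorem degreeOf_pderiv_lt (h : pderiv i p ≠ 0) : degreeOf i (pderiv i p) < degreeOf i p := by
  have hle : ∀ m ∈ (pderiv i p).support, m i + 1 ≤ degreeOf i p := fun m hm => by
    rw [mem_support_iff, coeff_pderiv] at hm
    have := monomial_le_degreeOf i (mem_support_iff.mpr (left_ne_zero_of_mul hm))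
    simpa using this
  obtain ⟨m, hm⟩ := support_nonempty.mpr h
  exact (degreeOf_lt_iff (by have := hle m hm; omega)).mpr fun n hn => hle n hn

variable [NoZeroDivisors R] [CharZero R]

theorem pderiv_ne_zero_of_mem_vars (h : i ∈ p.vars) : pderiv i p ≠ 0 := by
  obtain ⟨m, hm, hmi⟩ := (mem_vars_iff_mem_support i).mp h
  have hle : Finsupp.single i 1 ≤ m :=
    Finsupp.single_le_iff.mpr (Nat.one_le_iff_ne_zero.mpr (Finsupp.mem_support_iff.mp hmi))
  intro h0
  have := congrArg (coeff (m - Finsupp.single i 1)) h0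
  rw [coeff_pderiv, tsub_add_cancel_of_le hle, coeff_zero] at this
  exact mul_ne_zero (mem_support_iff.mp hm) (Nat.cast_add_one_ne_zero _) (by exact_mod_cast this)

theorem notMem_vars_of_dvd_pderiv (h : p ∣ pderiv i p) : i ∉ p.vars := by
  intro hi
  have hne := pderiv_ne_zero_of_mem_vars hi
  obtain ⟨r, hr⟩ := h
  have hp : p ≠ 0 := by rintro rfl; simp at hi
  have hr0 : r ≠ 0 := by rintro rfl; simp [hr] at hne
  have := degreeOf_pderiv_lt hne
  rw [hr, degreeOf_mul_eq hp hr0] at this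
  omega

end PDeriv

section Shift

variable {R : Type*} [CommRing R]

noncomputable def shiftDeriv : Derivation R (MvPolynomial ℕ R) (MvPolynomial ℕ R) :=
  mkDerivation R fun n => X (n + 1)

@[simp] theorem shiftDeriv_X (n : ℕ) : shiftDeriv (X n : MvPolynomial ℕ R) = X (n + 1) :=
  mkDerivation_X _ _ _

theorem pderiv_succ_shiftDeriv (N : ℕ) (f : MvPolynomial ℕ R) :
    pderiv (N + 1) (shiftDeriv f) = pderiv N f + shiftDeriv (pderiv (N + 1) f) := by
  classical
  have hcomm : ⁅(pderiv (N + 1) : Derivation R (MvPolynomial ℕ R) (MvPolynomial ℕ R)),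
      shiftDeriv⁆ = pderiv (R := R) N := by
    refine derivation_ext fun i => ?_
    rw [Derivation.commutator_apply, shiftDeriv_X]
    simp only [pderiv_X, Pi.single_apply, add_left_inj]
    split_ifs <;> simp
  have := congrArg (fun D : Derivation R (MvPolynomial ℕ R) (MvPolynomial ℕ R) => D f) hcomm
  rw [Derivation.commutator_apply] at this
  rw [← this, sub_add_cancel]

end Shift

theorem vars_addMonoidAlgebraMap_subset {σ S : Type*} [CommSemiring S] (f : S →+ S)
    (p : MvPolynomial σ S) : vars (AddMonoidAlgebra.map f p : MvPolynomial σ S) ⊆ p.vars := by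
  intro i hi
  obtain ⟨d, hd, hid⟩ := (mem_vars_iff_mem_support i).mp hi
  refine (mem_vars_iff_mem_support i).mpr ⟨d, mem_support_iff.mpr fun h => ?_, hid⟩
  rw [mem_support_iff, coeff_addMonoidAlgebraMap, h, map_zero] at hd
  exact hd rfl

section ExtendDeriv

variable {R : Type*} [CommRing R] (δ : R →+ R)

/-- The derivation of `R{x}` extending `δ`, the variable `n` standing for `x^(n)`. -/
noncomputable def extendDeriv (p : MvPolynomial ℕ R) : MvPolynomial ℕ R :=
  AddMonoidAlgebra.map δ p + shiftDeriv p

theorem extendDeriv_C (a : R) : extendDeriv δ (C a) = C (δ a) := by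
  classical
  have hmap : AddMonoidAlgebra.map δ (C a : MvPolynomial ℕ R) = C (δ a) := by
    ext m
    simp [coeff_C, apply_ite δ]
  rw [extendDeriv, hmap, ← algebraMap_eq, Derivation.map_algebraMap, add_zero]

theorem extendDeriv_add (p q : MvPolynomial ℕ R) :
    extendDeriv δ (p + q) = extendDeriv δ p + extendDeriv δ q := by
  rw [extendDeriv, extendDeriv, extendDeriv, AddMonoidAlgebra.map_add, map_add]
  abel

theorem extendDeriv_mul_X (p : MvPolynomial ℕ R) (n : ℕ) :
    extendDeriv δ (p * X n) = p * X (n + 1) + X n * extendDeriv δ p := by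
  classical
  have hmap : AddMonoidAlgebra.map δ (p * X n) = AddMonoidAlgebra.map δ p * X n := by
    ext m
    simp [coeff_mul_X', apply_ite δ]
  rw [extendDeriv, extendDeriv, hmap, Derivation.leibniz, shiftDeriv_X, smul_eq_mul, smul_eq_mul]
  ring

theorem pderiv_succ_extendDeriv {N : ℕ} {p : MvPolynomial ℕ R}
    (hp : ∀ i ∈ p.vars, i ≤ N) :
    pderiv (N + 1) (extendDeriv δ p) = pderiv N p := by
  have hvars : ∀ {q : MvPolynomial ℕ R}, q.vars ⊆ p.vars → pderiv (N + 1) q = 0 :=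
    fun hq => pderiv_eq_zero_of_notMem_vars fun h => by have := hp _ (hq h); omega
  rw [extendDeriv, map_add, pderiv_succ_shiftDeriv, hvars subset_rfl, map_zero, add_zero,
    hvars (vars_addMonoidAlgebraMap_subset δ p), zero_add]

theorem apply_algebraMap_eq_extendDeriv {L : Type*} [CommRing L] [Algebra (MvPolynomial ℕ R) L]
    (D : L → L) (hadd : ∀ x y, D (x + y) = D x + D y)
    (hmul : ∀ x y, D (x * y) = x * D y + y * D x)
    (hC : ∀ a, D (algebraMap (MvPolynomial ℕ R) L (C a))
      = algebraMap (MvPolynomial ℕ R) L (C (δ a)))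
    (hX : ∀ n, D (algebraMap (MvPolynomial ℕ R) L (X n))
      = algebraMap (MvPolynomial ℕ R) L (X (n + 1)))
    (r : MvPolynomial ℕ R) :
    D (algebraMap (MvPolynomial ℕ R) L r)
      = algebraMap (MvPolynomial ℕ R) L (extendDeriv δ r) := by
  induction r using MvPolynomial.induction_on with
  | C a => rw [hC, extendDeriv_C]
  | add p q hp hq => rw [map_add, hadd, hp, hq, extendDeriv_add, map_add]
  | mul_X p n hp => rw [map_mul, hmul, hX, hp, extendDeriv_mul_X, map_add, map_mul, map_mul]

end ExtendDeriv

theorem vars_eq_empty_of_extendDeriv_mul_eq {K : Type*} [Field K] [CharZero K]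
    (δ : K →+ K) {p q : MvPolynomial ℕ K} (hpq : IsRelPrime p q)
    (h : extendDeriv δ p * q = p * extendDeriv δ q) : p.vars = ∅ ∧ q.vars = ∅ := by
  rw [← Finset.union_eq_empty, ← Finset.not_nonempty_iff_eq_empty]
  intro hS
  set N := (p.vars ∪ q.vars).max' hS
  have hpN : ∀ i ∈ p.vars, i ≤ N := fun i hi => (p.vars ∪ q.vars).le_max' i (by simp [hi])
  have hqN : ∀ i ∈ q.vars, i ≤ N := fun i hi => (p.vars ∪ q.vars).le_max' i (by simp [hi])
  have hp : pderiv (N + 1) p = 0 :=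
    pderiv_eq_zero_of_notMem_vars fun hi => by have := hpN _ hi; omega
  have hq : pderiv (N + 1) q = 0 :=
    pderiv_eq_zero_of_notMem_vars fun hi => by have := hqN _ hi; omega
  have hN : pderiv N p * q = p * pderiv N q := by
    simpa only [pderiv_mul, pderiv_succ_extendDeriv δ hpN, pderiv_succ_extendDeriv δ hqN, hp, hq,
      mul_zero, zero_mul, add_zero, zero_add] using congrArg (pderiv (N + 1)) h
  have hdp : p ∣ pderiv N p := hpq.dvd_of_dvd_mul_right (hN ▸ dvd_mul_right p _)
  have hdq : q ∣ pderiv N q := hpq.symm.dvd_of_dvd_mul_left (hN ▸ dvd_mul_left q _)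
  rcases Finset.mem_union.mp (Finset.max'_mem _ hS) with hNp | hNq
  · exact notMem_vars_of_dvd_pderiv hdp hNp
  · exact notMem_vars_of_dvd_pderiv hdq hNq

end MvPolynomial

theorem constants_of_differential_rational_functions_general
    {K : Type*} [Field K] [CharZero K]
    (δ : K → K)
    (hδadd : ∀ x y, δ (x + y) = δ x + δ y)
    (δF : FractionRing (MvPolynomial ℕ K) → FractionRing (MvPolynomial ℕ K))
    (hFadd : ∀ x y, δF (x + y) = δF x + δF y)
    (hFmul : ∀ x y, δF (x * y) = x * δF y + y * δF x)
    (hFC : ∀ a : K, δF (algebraMap (MvPolynomial ℕ K) (FractionRing (MvPolynomial ℕ K)) (C a))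
      = algebraMap (MvPolynomial ℕ K) (FractionRing (MvPolynomial ℕ K)) (C (δ a)))
    (hFX : ∀ n : ℕ, δF (algebraMap (MvPolynomial ℕ K) (FractionRing (MvPolynomial ℕ K)) (X n))
      = algebraMap (MvPolynomial ℕ K) (FractionRing (MvPolynomial ℕ K)) (X (n + 1))) :
    ∀ z : FractionRing (MvPolynomial ℕ K), δF z = 0 →
      ∃ c : K, δ c = 0 ∧
        algebraMap (MvPolynomial ℕ K) (FractionRing (MvPolynomial ℕ K)) (C c) = z := by
  intro z hz
  set ι := algebraMap (MvPolynomial ℕ K) (FractionRing (MvPolynomial ℕ K))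
  set δ' : K →+ K := AddMonoidHom.mk' δ hδadd
  have hD := apply_algebraMap_eq_extendDeriv δ' δF hFadd hFmul hFC hFX
  set p := IsFractionRing.num (MvPolynomial ℕ K) z
  set q : MvPolynomial ℕ K := ↑(IsFractionRing.den (MvPolynomial ℕ K) z)
  have hι : Function.Injective ι := IsFractionRing.injective _ _
  have hzq : z * ι q = ι p := (IsFractionRing.num_mul_den_eq_num_iff_eq (A := _)).mpr rfl
  have hpq : extendDeriv δ' p * q = p * extendDeriv δ' q := by
    refine hι ?_
    have hδz := congrArg δF hzq
    rw [hFmul, hz, mul_zero, add_zero, hD, hD] at hδz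
    rw [map_mul, map_mul, ← hδz, ← hzq]
    ring
  obtain ⟨hp, hq⟩ := vars_eq_empty_of_extendDeriv_mul_eq δ'
    (IsFractionRing.num_den_reduced _ z) hpq
  rw [vars_eq_empty_iff_eq_C] at hp hq
  have hzc : ι (C (coeff 0 p / coeff 0 q)) = z :=
    calc ι (C (coeff 0 p / coeff 0 q)) = ι (C (coeff 0 p)) / ι (C (coeff 0 q)) :=
          map_div₀ (ι.comp C) _ _
      _ = ι p / ι q := by rw [← hp, ← hq]
      _ = z := IsFractionRing.mk'_num_den' _ z
  refine ⟨_, C_eq_zero.mp (hι ?_), hzc⟩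
  rw [← hFC, hzc, hz, map_zero]

/-- Let `K` be a differential field of characteristic zero and let `K⟨x⟩`
be the fraction field of the differential polynomial ring `K{x}` (modelled as
`FractionRing (MvPolynomial ℕ K)`, where the variable `n` stands for `x^(n)`), equipped
with the derivation `δF` extending that of `K` and sending `x^(n)` to `x^(n+1)`. Then the
field of constants of `K⟨x⟩` equals the field of constants of `K`: every constant of
`K⟨x⟩` comes from a constant of `K`, and every constant of `K` is a constant of `K⟨x⟩`. -/
theorem constants_of_differential_rational_functions
    {K : Type*} [Field K] [CharZero K]
    (δ : K → K)
    (hδadd : ∀ x y, δ (x + y) = δ x + δ y)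
    (hδmul : ∀ x y, δ (x * y) = x * δ y + y * δ x)
    (δF : FractionRing (MvPolynomial ℕ K) → FractionRing (MvPolynomial ℕ K))
    (hFadd : ∀ x y, δF (x + y) = δF x + δF y)
    (hFmul : ∀ x y, δF (x * y) = x * δF y + y * δF x)
    (hFC : ∀ a : K, δF (algebraMap (MvPolynomial ℕ K) (FractionRing (MvPolynomial ℕ K)) (C a))
      = algebraMap (MvPolynomial ℕ K) (FractionRing (MvPolynomial ℕ K)) (C (δ a)))
    (hFX : ∀ n : ℕ, δF (algebraMap (MvPolynomial ℕ K) (FractionRing (MvPolynomial ℕ K)) (X n))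
      = algebraMap (MvPolynomial ℕ K) (FractionRing (MvPolynomial ℕ K)) (X (n + 1))) :
    ∀ z : FractionRing (MvPolynomial ℕ K), δF z = 0 →
      ∃ c : K, δ c = 0 ∧
        algebraMap (MvPolynomial ℕ K) (FractionRing (MvPolynomial ℕ K)) (C c) = z :=
  constants_of_differential_rational_functions_general δ hδadd δF hFadd hFmul hFC hFX
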